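/- arXiv:2509.19961 — 2 statements merged into one kernel-verified Lean document; each statement's English description precedes it below -/
import Mathlib

section
/- There exists t₀ > 0 such that for every (m,n) ∈ ℤ² with m ≥ 0, n ≥ 0, t_{(m,n)} ≥ t₀, and such that the interior of R_{(m,n)} contains no point of ℤ²: every (m′,n′) ∈ ℤ² with m′ ≥ 0, n′ ≥ 0 lying strictly between the two parallel lines {(x,y) ∈ ℝ² : y = αx} and {(x,y) ∈ ℝ² : y − n = α(x − m)} (i.e. in the open region bounded by them) satisfies m′ > m. -/
/-!
Write `e(k,l) = l - αk`, so that `s_{(k,l)} = -e(k,l)/(α-β)` and `t_{(k,l)} = k + e(k,l)/(α-β)`.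
Let `δ = min 1 (α-β)`. A lattice point with `k ≥ 0`, `e(k,l)` strictly between `0` and `e(m,n)`
and `|e(k,l)| < δ` has `t_{(k,l)} > 0`, so when `R_{(m,n)}` has no interior lattice point it
satisfies `t_{(k,l)} ≥ t_{(m,n)}`.

The eigenvalue `λ ∈ (0,1)` is a root of the monic integer characteristic polynomial of `A`, hence
not rational, so `α` is irrational. Hence there are lattice points with `k ≥ 1` and `e(k,l)` of
either sign in `(-δ, δ)`; once `t_{(m,n)}` exceeds their `k + 1`, they force `|e(m,n)| < δ`.
A lattice point `(m',n')` between the two lines with `m' ≤ m` and its complement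
`(m-m', n-n')` would then both have positive `t`, summing to `t_{(m,n)}`, which contradicts
`t_{(m',n')} ≥ t_{(m,n)}`.
-/

/-- `t_{(m,n)} = (n − βm)/(α − β)`, the coordinate of `(m,n)` along the direction `(1,α)`
in the basis `(1,α), (1,β)`. -/
noncomputable def tcoord (α β : ℝ) (m n : ℤ) : ℝ := ((n : ℝ) - β * m) / (α - β)

/-- `s_{(m,n)} = (αm − n)/(α − β)`, the coordinate of `(m,n)` along the direction `(1,β)`. -/
noncomputable def scoord (α β : ℝ) (m n : ℤ) : ℝ := (α * m - (n : ℝ)) / (α - β)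

/-- The parallelogram `R_{(m,n)}` with opposite vertices `(0,0)` and `(m,n)` whose sides are
parallel to `(1,α)` and `(1,β)`:
`{a·(1,α) + b·(1,β) : a between 0 and t_{(m,n)}, b between 0 and s_{(m,n)}}`. -/
def Rpar (α β : ℝ) (m n : ℤ) : Set (ℝ × ℝ) :=
  {p | ∃ a b : ℝ, a ∈ Set.uIcc 0 (tcoord α β m n) ∧ b ∈ Set.uIcc 0 (scoord α β m n) ∧
    p = (a + b, a * α + b * β)}

/-- The interior of the parallelogram `R_{(m,n)}` contains no point of `ℤ²`. -/
def NoLatticeInterior (α β : ℝ) (m n : ℤ) : Prop :=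
  ∀ p ∈ interior (Rpar α β m n), ¬ ∃ k l : ℤ, p = ((k : ℝ), (l : ℝ))

/-- `(p,q)` (with `q ≥ 1` and `p − qα < 0`) is a *good lower approximation of the second kind*
of `α`: `|p − qα| < |p′ − q′α|` for every `(p′,q′) ≠ (p,q)` with `1 ≤ q′ ≤ q` and
`p′ − q′α < 0`. -/
def GoodLower (α : ℝ) (p q : ℤ) : Prop :=
  1 ≤ q ∧ (p : ℝ) - q * α < 0 ∧
    ∀ p' q' : ℤ, (p', q') ≠ (p, q) → 1 ≤ q' → q' ≤ q → (p' : ℝ) - q' * α < 0 →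
      |(p : ℝ) - q * α| < |(p' : ℝ) - q' * α|

/-- `(p,q)` (with `q ≥ 1` and `p − qα > 0`) is a *good upper approximation of the second kind*
of `α`. -/
def GoodUpper (α : ℝ) (p q : ℤ) : Prop :=
  1 ≤ q ∧ 0 < (p : ℝ) - q * α ∧
    ∀ p' q' : ℤ, (p', q') ≠ (p, q) → 1 ≤ q' → q' ≤ q → 0 < (p' : ℝ) - q' * α →
      |(p : ℝ) - q * α| < |(p' : ℝ) - q' * α|

open Set

open Polynomial in
theorem irrational_of_sq_sub_mul_add_eq_zero {x : ℝ} {T d : ℤ} (hx : x ^ 2 - T * x + d = 0)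
    (h0 : 0 < x) (h1 : x < 1) : Irrational x := by
  rintro ⟨r, rfl⟩
  have hroot : aeval r (X ^ 2 - C T * X + C d : ℤ[X]) = 0 := by
    simp only [map_add, map_sub, map_mul, map_pow, aeval_X, eq_intCast, map_intCast]
    exact_mod_cast hx
  obtain ⟨z, rfl⟩ := isInteger_of_is_root_of_monic (by monicity!) hroot
  simp only [algebraMap_int_eq, eq_intCast, Rat.cast_intCast] at h0 h1
  have hz0 : 0 < z := by exact_mod_cast h0
  have hz1 : z < 1 := by exact_mod_cast h1
  omega

theorem irrational_of_eigenvector (A : Matrix (Fin 2) (Fin 2) ℤ) {lam α : ℝ} (h0 : 0 < lam)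
    (h1 : lam < 1) (hA0 : (A 0 0 : ℝ) + A 0 1 * α = lam)
    (hA1 : (A 1 0 : ℝ) + A 1 1 * α = lam * α) : Irrational α := by
  have hlam : Irrational lam :=
    irrational_of_sq_sub_mul_add_eq_zero (T := A 0 0 + A 1 1) (d := A 0 0 * A 1 1 - A 0 1 * A 1 0)
      (by push_cast; linear_combination (A 1 1 - lam) * hA0 - A 0 1 * hA1) h0 h1
  rw [← hA0] at hlam
  exact (hlam.of_intCast_add _).of_intCast_mul _

theorem Irrational.exists_pos_sub_mul_mem_Ioo_neg_of_mem_Ioo_pos {α : ℝ} (hα : Irrational α)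
    {k l : ℤ} (hk : 0 < k) (he : (l : ℝ) - α * k ∈ Ioo 0 1) :
    ∃ k' l' : ℤ, 0 < k' ∧ (l' : ℝ) - α * k' ∈ Ioo (-((l : ℝ) - α * k)) 0 := by
  set θ := (l : ℝ) - α * k
  -- `Mθ - 1 ∈ (-θ, 0]`, and it is nonzero because `α` is irrational.
  set M := ⌊θ⁻¹⌋
  have hM : 0 < M := Int.floor_pos.2 (one_le_inv₀ he.1 |>.2 he.2.le)
  have hMθ : M * θ ≤ 1 := by
    have := mul_le_mul_of_nonneg_right (Int.floor_le θ⁻¹) he.1.le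
    rwa [inv_mul_cancel₀ he.1.ne'] at this
  have hMθ' : 1 < (M + 1) * θ := by
    have := mul_lt_mul_of_pos_right (Int.lt_floor_add_one θ⁻¹) he.1
    rwa [inv_mul_cancel₀ he.1.ne'] at this
  have hne : ((M * l - 1 : ℤ) : ℝ) - α * (M * k : ℤ) ≠ 0 := by
    have := ((hα.intCast_mul (mul_pos hM hk).ne').intCast_sub (M * l - 1)).ne_zero
    contrapose! this
    linear_combination this
  refine ⟨M * k, M * l - 1, mul_pos hM hk, ?_, ?_⟩
  · push_cast; nlinarith
  · push_cast at hne ⊢; exact lt_of_le_of_ne (by nlinarith) hne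

theorem Irrational.exists_pos_sub_mul_mem_Ioo_neg {α δ : ℝ} (hα : Irrational α) (hδ : 0 < δ)
    (hδ1 : δ ≤ 1) : ∃ k l : ℤ, 0 < k ∧ (l : ℝ) - α * k ∈ Ioo (-δ) 0 := by
  have hdense : Dense (AddSubgroup.closure {α, 1} : Set ℝ) :=
    dense_addSubgroupClosure_pair_iff.2 (by rwa [div_one])
  obtain ⟨x, hx, hδx, hx0⟩ := hdense.exists_between (neg_lt_zero.2 hδ)
  obtain ⟨a, b, rfl⟩ := AddSubgroup.mem_closure_pair.1 hx
  simp only [zsmul_eq_mul, mul_one] at hδx hx0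
  rcases lt_trichotomy a 0 with ha | rfl | ha
  · exact ⟨-a, b, neg_pos.2 ha, by push_cast; constructor <;> linarith⟩
  · simp only [Int.cast_zero, zero_mul, zero_add] at hδx hx0
    have : (-1 : ℤ) < b := by exact_mod_cast (neg_le_neg hδ1).trans_lt hδx
    have : b < 0 := by exact_mod_cast hx0
    omega
  · obtain ⟨k, l, hk, he⟩ := hα.exists_pos_sub_mul_mem_Ioo_neg_of_mem_Ioo_pos (l := -b) ha
      (by push_cast; constructor <;> linarith)
    exact ⟨k, l, hk, by push_cast at he; constructor <;> linarith [he.1, he.2]⟩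

theorem Irrational.exists_pos_sub_mul_mem_Ioo_pos {α δ : ℝ} (hα : Irrational α) (hδ : 0 < δ)
    (hδ1 : δ ≤ 1) : ∃ k l : ℤ, 0 < k ∧ (l : ℝ) - α * k ∈ Ioo 0 δ := by
  obtain ⟨k, l, hk, he⟩ := hα.neg.exists_pos_sub_mul_mem_Ioo_neg hδ hδ1
  exact ⟨k, -l, hk, by push_cast; constructor <;> linarith [he.1, he.2]⟩

section UIoo

variable {K : Type*} {x a : K}

section OrderedAddGroup

variable [AddCommGroup K] [LinearOrder K] [IsOrderedAddMonoid K]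

theorem abs_lt_abs_of_mem_uIoo_zero (h : x ∈ uIoo 0 a) : |x| < |a| := by
  rw [uIoo_eq_union] at h
  rcases h with ⟨h0, ha⟩ | ⟨ha, h0⟩
  · rwa [abs_of_pos h0, abs_of_pos (h0.trans ha)]
  · rw [abs_of_neg h0, abs_of_neg (ha.trans h0)]
    exact neg_lt_neg ha

theorem sub_mem_uIoo_zero (h : x ∈ uIoo 0 a) : a - x ∈ uIoo 0 a := by
  rw [uIoo_eq_union] at h
  rcases h with ⟨h0, ha⟩ | ⟨ha, h0⟩
  · exact mem_uIoo_of_lt (sub_pos.2 ha) (sub_lt_self a h0)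
  · exact mem_uIoo_of_gt (lt_sub_left_of_add_lt (add_lt_of_neg_left a h0)) (sub_neg.2 ha)

end OrderedAddGroup

theorem neg_div_mem_uIoo_zero [Field K] [LinearOrder K] [IsStrictOrderedRing K] {c : K}
    (hc : 0 < c) (h : x ∈ uIoo 0 a) : -x / c ∈ uIoo 0 (-a / c) := by
  rw [uIoo_eq_union] at h
  rcases h with ⟨h0, ha⟩ | ⟨ha, h0⟩
  · exact mem_uIoo_of_gt ((div_lt_div_iff_of_pos_right hc).2 (neg_lt_neg ha))
      (div_neg_of_neg_of_pos (neg_lt_zero.2 h0) hc)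
  · exact mem_uIoo_of_lt (div_pos (neg_pos.2 h0) hc)
      ((div_lt_div_iff_of_pos_right hc).2 (neg_lt_neg ha))

end UIoo

section Parallelogram

variable {α β : ℝ}

theorem tcoord_eq (hαβ : α ≠ β) (k l : ℤ) :
    tcoord α β k l = k + ((l : ℝ) - α * k) / (α - β) := by
  have := sub_ne_zero.2 hαβ
  rw [tcoord]
  field_simp
  ring

theorem scoord_eq (k l : ℤ) : scoord α β k l = -((l : ℝ) - α * k) / (α - β) := by
  rw [neg_sub]
  rfl

theorem tcoord_sub (m n k l : ℤ) :
    tcoord α β (m - k) (n - l) = tcoord α β m n - tcoord α β k l := by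
  simp only [tcoord, Int.cast_sub, ← sub_div]
  ring_nf

theorem mem_interior_Rpar (hαβ : α ≠ β) {m n k l : ℤ}
    (ht : tcoord α β k l ∈ uIoo 0 (tcoord α β m n))
    (hs : scoord α β k l ∈ uIoo 0 (scoord α β m n)) :
    ((k : ℝ), (l : ℝ)) ∈ interior (Rpar α β m n) := by
  set U : Set (ℝ × ℝ) := {p | (p.2 - β * p.1) / (α - β) ∈ uIoo 0 (tcoord α β m n) ∧
    (α * p.1 - p.2) / (α - β) ∈ uIoo 0 (scoord α β m n)}
  have hU : IsOpen U :=
    (isOpen_Ioo.preimage (by fun_prop)).inter (isOpen_Ioo.preimage (by fun_prop))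
  have hUR : U ⊆ Rpar α β m n := by
    rintro ⟨x, y⟩ ⟨hx, hy⟩
    refine ⟨_, _, uIoo_subset_uIcc_self hx, uIoo_subset_uIcc_self hy, ?_⟩
    have := sub_ne_zero.2 hαβ
    ext <;> field_simp <;> ring
  exact interior_maximal hUR hU ⟨ht, hs⟩

theorem tcoord_pos (hβα : β < α) {k l : ℤ} (hk : 0 ≤ k) (he0 : (l : ℝ) - α * k ≠ 0)
    (he : |(l : ℝ) - α * k| < min 1 (α - β)) : 0 < tcoord α β k l := by
  rcases hk.eq_or_lt with rfl | hk
  · simp only [Int.cast_zero, mul_zero, sub_zero] at he0 he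
    have : |l| < 1 := by exact_mod_cast he.trans_le (min_le_left _ _)
    exact absurd (Int.abs_lt_one_iff.1 this) (by exact_mod_cast he0)
  · have hk : (1 : ℝ) ≤ k := by exact_mod_cast hk
    have : -1 < ((l : ℝ) - α * k) / (α - β) := by
      rw [lt_div_iff₀ (sub_pos.2 hβα)]
      linarith [neg_abs_le ((l : ℝ) - α * k), he.trans_le (min_le_right _ _)]
    rw [tcoord_eq hβα.ne']
    linarith

theorem tcoord_le_of_noLatticeInterior (hβα : β < α) {m n k l : ℤ}
    (hNL : NoLatticeInterior α β m n) (hk : 0 ≤ k)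
    (he : (l : ℝ) - α * k ∈ uIoo 0 ((n : ℝ) - α * m)) (hδ : |(l : ℝ) - α * k| < min 1 (α - β)) :
    tcoord α β m n ≤ tcoord α β k l := by
  by_contra! hlt
  have hpos := tcoord_pos hβα hk (ne_of_mem_of_not_mem he left_notMem_uIoo) hδ
  refine hNL _ (mem_interior_Rpar hβα.ne' ?_ ?_) ⟨k, l, rfl⟩
  · rw [uIoo_of_lt (hpos.trans hlt)]
    exact ⟨hpos, hlt⟩
  · rw [scoord_eq, scoord_eq]
    exact neg_div_mem_uIoo_zero (sub_pos.2 hβα) he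

theorem tcoord_lt_add_one_of_noLatticeInterior (hβα : β < α) {m n k l : ℤ}
    (hNL : NoLatticeInterior α β m n) (hk : 0 ≤ k)
    (he : (l : ℝ) - α * k ∈ uIoo 0 ((n : ℝ) - α * m)) (hδ : |(l : ℝ) - α * k| < min 1 (α - β)) :
    tcoord α β m n < k + 1 := by
  have : ((l : ℝ) - α * k) / (α - β) < 1 := by
    rw [div_lt_one (sub_pos.2 hβα)]
    exact (le_abs_self _).trans_lt (hδ.trans_le (min_le_right _ _))
  have := tcoord_le_of_noLatticeInterior hβα hNL hk he hδ
  rw [tcoord_eq hβα.ne' k l] at this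
  linarith

end Parallelogram

theorem stmt5_general (A : Matrix (Fin 2) (Fin 2) ℤ)
    (lam α β : ℝ)
    (hlam0 : 0 < lam) (hlam1 : lam < 1)
    (hAα0 : (A 0 0 : ℝ) + A 0 1 * α = lam)
    (hAα1 : (A 1 0 : ℝ) + A 1 1 * α = lam * α)
    (hβα : β < α) :
    ∃ t₀ > (0 : ℝ), ∀ m n : ℤ, 0 ≤ m → 0 ≤ n → t₀ ≤ tcoord α β m n →
      NoLatticeInterior α β m n →
      ∀ m' n' : ℤ, 0 ≤ m' → 0 ≤ n' →
        min 0 ((n : ℝ) - α * m) < (n' : ℝ) - α * m' →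
        (n' : ℝ) - α * m' < max 0 ((n : ℝ) - α * m) →
        m < m' := by
  have hα := irrational_of_eigenvector A hlam0 hlam1 hAα0 hAα1
  have hδ : 0 < min 1 (α - β) := lt_min one_pos (sub_pos.2 hβα)
  obtain ⟨k₁, l₁, hk₁, he₁⟩ := hα.exists_pos_sub_mul_mem_Ioo_neg hδ (min_le_left _ _)
  obtain ⟨k₂, l₂, hk₂, he₂⟩ := hα.exists_pos_sub_mul_mem_Ioo_pos hδ (min_le_left _ _)
  have hk₁' : (1 : ℝ) ≤ k₁ := by exact_mod_cast hk₁
  have hk₂' : (1 : ℝ) ≤ k₂ := by exact_mod_cast hk₂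
  refine ⟨k₁ + k₂, by linarith, fun m n _ _ ht hNL m' n' hm' _ hlo hhi => ?_⟩
  have he : (n' : ℝ) - α * m' ∈ uIoo 0 ((n : ℝ) - α * m) := ⟨hlo, hhi⟩
  have hsmall : |(n : ℝ) - α * m| < min 1 (α - β) := by
    by_contra! hD
    rcases le_abs'.1 hD with hD | hD
    · have := tcoord_lt_add_one_of_noLatticeInterior hβα hNL hk₁.le
        (mem_uIoo_of_gt (by linarith [he₁.1]) he₁.2) (abs_lt.2 ⟨he₁.1, by linarith [he₁.2]⟩)
      linarith
    · have := tcoord_lt_add_one_of_noLatticeInterior hβα hNL hk₂.le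
        (mem_uIoo_of_lt he₂.1 (by linarith [he₂.2])) (abs_lt.2 ⟨by linarith [he₂.1], he₂.2⟩)
      linarith
  by_contra! hle
  have he' : ((n - n' : ℤ) : ℝ) - α * (m - m' : ℤ) ∈ uIoo 0 ((n : ℝ) - α * m) := by
    convert sub_mem_uIoo_zero he using 1
    push_cast
    ring
  have hge := tcoord_le_of_noLatticeInterior hβα hNL hm' he
    ((abs_lt_abs_of_mem_uIoo_zero he).trans hsmall)
  have hpos := tcoord_pos hβα (sub_nonneg.2 hle) (ne_of_mem_of_not_mem he' left_notMem_uIoo)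
    ((abs_lt_abs_of_mem_uIoo_zero he').trans hsmall)
  rw [tcoord_sub] at hpos
  linarith

/-- There exists `t₀ > 0` such that for every `(m,n) ∈ ℤ²` with
`m, n ≥ 0`, `t_{(m,n)} ≥ t₀`, and such that the interior of `R_{(m,n)}` contains no point
of `ℤ²`: every `(m′,n′) ∈ ℤ²` with `m′, n′ ≥ 0` lying strictly between the parallel lines
`y = αx` and `y − n = α(x − m)` satisfies `m′ > m`. Lying strictly between the two lines is
expressed as `min 0 (n − αm) < n′ − αm′ < max 0 (n − αm)`. -/
theorem stmt5 (A : Matrix (Fin 2) (Fin 2) ℤ) (hdet : A.det = 1)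
    (lam mu α β : ℝ)
    (hlam0 : 0 < lam) (hlam1 : lam < 1) (hmu : 1 < mu)
    (hAα0 : (A 0 0 : ℝ) + A 0 1 * α = lam)
    (hAα1 : (A 1 0 : ℝ) + A 1 1 * α = lam * α)
    (hAβ0 : (A 0 0 : ℝ) + A 0 1 * β = mu)
    (hAβ1 : (A 1 0 : ℝ) + A 1 1 * β = mu * β)
    (hβα : β < α) (hα : 0 < α) :
    ∃ t₀ > (0 : ℝ), ∀ m n : ℤ, 0 ≤ m → 0 ≤ n → t₀ ≤ tcoord α β m n →
      NoLatticeInterior α β m n →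
      ∀ m' n' : ℤ, 0 ≤ m' → 0 ≤ n' →
        min 0 ((n : ℝ) - α * m) < (n' : ℝ) - α * m' →
        (n' : ℝ) - α * m' < max 0 ((n : ℝ) - α * m) →
        m < m' :=
  stmt5_general A lam α β hlam0 hlam1 hAα0 hAα1 hβα
end

section
/- For all t₁, t₂ ∈ T with t₁ < t₂, the set {t ∈ T : t₁ < t < t₂} is finite. -/
/-- `T⁻`: the set of values `t_{(m,n)} > 0` with `n − αm < 0` such that the interior of
`R_{(m,n)}` contains no point of `ℤ²`. -/
def Tminus (α β : ℝ) : Set ℝ :=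
  {t | ∃ m n : ℤ, t = tcoord α β m n ∧ 0 < t ∧ (n : ℝ) - α * m < 0 ∧
    NoLatticeInterior α β m n}

/-- `T⁺`: the set of values `t_{(m,n)} > 0` with `n − αm > 0` such that the interior of
`R_{(m,n)}` contains no point of `ℤ²`. -/
def Tplus (α β : ℝ) : Set ℝ :=
  {t | ∃ m n : ℤ, t = tcoord α β m n ∧ 0 < t ∧ 0 < (n : ℝ) - α * m ∧
    NoLatticeInterior α β m n}

/-- `T = T⁺ ∪ T⁻`. -/
def Tset (α β : ℝ) : Set ℝ := Tplus α β ∪ Tminus α β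

/-!
If a lattice point `w` has `0 < t_w < t_{(m,n)}` and an `s`-coordinate of the same sign as
`s_{(m,n)}` but smaller in absolute value, then `w` lies in the interior of `R_{(m,n)}`. Lattice
points with arbitrarily small positive `t` and either sign of `s` exist: `A` preserves `ℤ²` and
acts by `(t, s) ↦ (λt, μs)`, so iterating it contracts `t` while keeping the sign of `s`. Hence
the `(m,n)` contributing to `T ∩ (t₁, t₂)` have `t` and `s` bounded, and there are finitely many.
-/

section

variable {α β : ℝ}

lemma tcoord_add_scoord (hαβ : α ≠ β) (m n : ℤ) :
    tcoord α β m n + scoord α β m n = m := by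
  unfold tcoord scoord
  field_simp [sub_ne_zero.mpr hαβ]
  ring

lemma tcoord_mul_add_scoord_mul (hαβ : α ≠ β) (m n : ℤ) :
    tcoord α β m n * α + scoord α β m n * β = n := by
  unfold tcoord scoord
  field_simp [sub_ne_zero.mpr hαβ]
  ring

lemma mem_interior_Rpar_s7 (hαβ : α ≠ β) {m n : ℤ} {a b : ℝ}
    (ha : a ∈ Set.uIoo 0 (tcoord α β m n)) (hb : b ∈ Set.uIoo 0 (scoord α β m n)) :
    (a + b, a * α + b * β) ∈ interior (Rpar α β m n) := by
  have hne := sub_ne_zero.mpr hαβ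
  let coords : ℝ × ℝ → ℝ × ℝ := fun p => ((p.2 - β * p.1) / (α - β), (α * p.1 - p.2) / (α - β))
  have hcoords : Continuous coords := by fun_prop
  let U := coords ⁻¹' (Set.uIoo 0 (tcoord α β m n) ×ˢ Set.uIoo 0 (scoord α β m n))
  have hU : U ⊆ Rpar α β m n := fun p hp =>
    ⟨(coords p).1, (coords p).2, Set.uIoo_subset_uIcc_self hp.1, Set.uIoo_subset_uIcc_self hp.2,
      by ext <;> simp only [coords] <;> field_simp <;> ring⟩
  refine interior_maximal hU ((isOpen_Ioo.prod isOpen_Ioo).preimage hcoords) ?_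
  have : coords (a + b, a * α + b * β) = (a, b) := by
    ext <;> simp only [coords] <;> field_simp <;> ring
  simpa [U, this] using ⟨ha, hb⟩

lemma abs_scoord_le_of_noLatticeInterior (hαβ : α ≠ β) {m n k l : ℤ}
    (h : NoLatticeInterior α β m n) (ht : 0 < tcoord α β k l)
    (htt : tcoord α β k l < tcoord α β m n) (hs : 0 < scoord α β k l * scoord α β m n) :
    |scoord α β m n| ≤ |scoord α β k l| := by
  by_contra! hlt
  refine h _ (mem_interior_Rpar_s7 hαβ (b := scoord α β k l) (Set.mem_uIoo_of_lt ht htt) ?_)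
    ⟨k, l, ?_⟩
  · rcases pos_and_pos_or_neg_and_neg_of_mul_pos hs with ⟨hkl, hmn⟩ | ⟨hkl, hmn⟩
    · rw [abs_of_pos hkl, abs_of_pos hmn] at hlt
      exact Set.mem_uIoo_of_lt hkl hlt
    · rw [abs_of_neg hkl, abs_of_neg hmn] at hlt
      exact Set.mem_uIoo_of_gt (by linarith) hkl
  · rw [tcoord_add_scoord hαβ, tcoord_mul_add_scoord_mul hαβ]

lemma finite_setOf_abs_intCast_le (C : ℝ) : {m : ℤ | |(m : ℝ)| ≤ C}.Finite := by
  refine (Set.finite_Icc (-⌈C⌉) ⌈C⌉).subset fun m hm => ?_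
  replace hm : -C ≤ m ∧ (m : ℝ) ≤ C := abs_le.mp hm
  constructor
  · rw [neg_le]; exact Int.le_ceil_iff.mpr (by push_cast; linarith)
  · exact Int.le_ceil_iff.mpr (by linarith)

lemma finite_setOf_abs_tcoord_le_abs_scoord_le (hαβ : α ≠ β) (a b : ℝ) :
    {p : ℤ × ℤ | |tcoord α β p.1 p.2| ≤ a ∧ |scoord α β p.1 p.2| ≤ b}.Finite := by
  refine ((finite_setOf_abs_intCast_le (a + b)).prod
    (finite_setOf_abs_intCast_le (a * |α| + b * |β|))).subset ?_
  rintro ⟨m, n⟩ ⟨ht, hs⟩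
  constructor
  · calc |(m : ℝ)| = |tcoord α β m n + scoord α β m n| := by rw [tcoord_add_scoord hαβ]
      _ ≤ a + b := (abs_add_le _ _).trans (add_le_add ht hs)
  · calc |(n : ℝ)| = |tcoord α β m n * α + scoord α β m n * β| := by
          rw [tcoord_mul_add_scoord_mul hαβ]
      _ ≤ a * |α| + b * |β| := by
          refine (abs_add_le _ _).trans (add_le_add ?_ ?_) <;> rw [abs_mul] <;>
            exact mul_le_mul_of_nonneg_right ‹_› (abs_nonneg _)

lemma exists_tcoord_pos_scoord_pos (hβα : β < α) :
    ∃ m n : ℤ, 0 < tcoord α β m n ∧ 0 < scoord α β m n := by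
  have hpos := sub_pos.mpr hβα
  obtain ⟨m, hm⟩ := exists_nat_gt (1 / (α - β))
  have hm' : 1 < (α - β) * m := by rwa [div_lt_iff₀' hpos] at hm
  refine ⟨m, ⌊β * m⌋ + 1, div_pos ?_ hpos, div_pos ?_ hpos⟩ <;> push_cast
  · linarith [Int.lt_floor_add_one (β * m)]
  · linarith [Int.floor_le (β * m)]

lemma tcoord_zero_one_pos (hβα : β < α) : 0 < tcoord α β 0 1 := by
  unfold tcoord; push_cast
  exact div_pos (by simp) (sub_pos.mpr hβα)

lemma scoord_zero_one_neg (hβα : β < α) : scoord α β 0 1 < 0 := by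
  unfold scoord; push_cast
  exact div_neg_of_neg_of_pos (by simp) (sub_pos.mpr hβα)

lemma scoord_pos (hβα : β < α) {m n : ℤ} (h : (n : ℝ) - α * m < 0) : 0 < scoord α β m n :=
  div_pos (by linarith) (sub_pos.mpr hβα)

lemma scoord_neg (hβα : β < α) {m n : ℤ} (h : 0 < (n : ℝ) - α * m) : scoord α β m n < 0 :=
  div_neg_of_neg_of_pos (by linarith) (sub_pos.mpr hβα)

variable {A : Matrix (Fin 2) (Fin 2) ℤ} {lam mu : ℝ}

lemma tcoord_scoord_matrix_apply (hαβ : α ≠ β)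
    (hAα0 : (A 0 0 : ℝ) + A 0 1 * α = lam) (hAα1 : (A 1 0 : ℝ) + A 1 1 * α = lam * α)
    (hAβ0 : (A 0 0 : ℝ) + A 0 1 * β = mu) (hAβ1 : (A 1 0 : ℝ) + A 1 1 * β = mu * β)
    (m n : ℤ) :
    tcoord α β (A 0 0 * m + A 0 1 * n) (A 1 0 * m + A 1 1 * n) = lam * tcoord α β m n ∧
    scoord α β (A 0 0 * m + A 0 1 * n) (A 1 0 * m + A 1 1 * n) = mu * scoord α β m n := by
  have hne := sub_ne_zero.mpr hαβ
  unfold tcoord scoord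
  push_cast
  constructor <;> rw [← mul_div_assoc] <;> congr 1 <;> apply mul_left_cancel₀ hne
  · linear_combination (n : ℝ) * (hAα1 - hAβ1 - β * (hAα0 - hAβ0)) +
      (m : ℝ) * (α * hAβ1 - β * hAα1 - β * (α * hAβ0 - β * hAα0))
  · linear_combination (n : ℝ) * (α * (hAα0 - hAβ0) - (hAα1 - hAβ1)) +
      (m : ℝ) * (α * (α * hAβ0 - β * hAα0) - (α * hAβ1 - β * hAα1))

lemma exists_coords_eq_pow_mul (hαβ : α ≠ β)
    (hAα0 : (A 0 0 : ℝ) + A 0 1 * α = lam) (hAα1 : (A 1 0 : ℝ) + A 1 1 * α = lam * α)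
    (hAβ0 : (A 0 0 : ℝ) + A 0 1 * β = mu) (hAβ1 : (A 1 0 : ℝ) + A 1 1 * β = mu * β)
    (m n : ℤ) (j : ℕ) :
    ∃ k l : ℤ, tcoord α β k l = lam ^ j * tcoord α β m n ∧
      scoord α β k l = mu ^ j * scoord α β m n := by
  induction j with
  | zero => exact ⟨m, n, by simp, by simp⟩
  | succ j ih =>
    obtain ⟨k, l, hk, hl⟩ := ih
    obtain ⟨ht, hs⟩ := tcoord_scoord_matrix_apply hαβ hAα0 hAα1 hAβ0 hAβ1 k l
    exact ⟨_, _, by rw [ht, hk, pow_succ']; ring, by rw [hs, hl, pow_succ']; ring⟩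

lemma exists_tcoord_lt_scoord_eq_pos_mul (hαβ : α ≠ β) (hlam0 : 0 < lam) (hlam1 : lam < 1)
    (hmu : 0 < mu)
    (hAα0 : (A 0 0 : ℝ) + A 0 1 * α = lam) (hAα1 : (A 1 0 : ℝ) + A 1 1 * α = lam * α)
    (hAβ0 : (A 0 0 : ℝ) + A 0 1 * β = mu) (hAβ1 : (A 1 0 : ℝ) + A 1 1 * β = mu * β)
    {ε : ℝ} (hε : 0 < ε) (m n : ℤ) (ht : 0 < tcoord α β m n) :
    ∃ k l : ℤ, 0 < tcoord α β k l ∧ tcoord α β k l < ε ∧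
      ∃ c : ℝ, 0 < c ∧ scoord α β k l = c * scoord α β m n := by
  obtain ⟨j, hj⟩ := exists_pow_lt_of_lt_one (div_pos hε ht) hlam1
  obtain ⟨k, l, hk, hl⟩ := exists_coords_eq_pow_mul hαβ hAα0 hAα1 hAβ0 hAβ1 m n j
  refine ⟨k, l, by rw [hk]; positivity, ?_, mu ^ j, by positivity, hl⟩
  rwa [hk, ← lt_div_iff₀ ht]

end

theorem stmt7_general (A : Matrix (Fin 2) (Fin 2) ℤ)
    (lam mu α β : ℝ)
    (hlam0 : 0 < lam) (hlam1 : lam < 1) (hmu : 1 < mu)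
    (hAα0 : (A 0 0 : ℝ) + A 0 1 * α = lam)
    (hAα1 : (A 1 0 : ℝ) + A 1 1 * α = lam * α)
    (hAβ0 : (A 0 0 : ℝ) + A 0 1 * β = mu)
    (hAβ1 : (A 1 0 : ℝ) + A 1 1 * β = mu * β)
    (hβα : β < α)
    (t₁ t₂ : ℝ) (h₁ : t₁ ∈ Tset α β) :
    {t ∈ Tset α β | t₁ < t ∧ t < t₂}.Finite := by
  have hαβ := hβα.ne'
  have ht₁ : 0 < t₁ := by rcases h₁ with ⟨_, _, rfl, h, -⟩ | ⟨_, _, rfl, h, -⟩ <;> exact h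
  have shrink := exists_tcoord_lt_scoord_eq_pos_mul hαβ hlam0 hlam1 (by linarith) hAα0 hAα1 hAβ0
    hAβ1 ht₁
  obtain ⟨kp, lp, htp, htpt₁, hsp⟩ : ∃ k l : ℤ, 0 < tcoord α β k l ∧ tcoord α β k l < t₁ ∧
      0 < scoord α β k l := by
    obtain ⟨m, n, ht, hs⟩ := exists_tcoord_pos_scoord_pos hβα
    obtain ⟨k, l, hk, hkt, c, hc, hl⟩ := shrink m n ht
    exact ⟨k, l, hk, hkt, hl ▸ mul_pos hc hs⟩
  obtain ⟨kn, ln, htn, htnt₁, hsn⟩ : ∃ k l : ℤ, 0 < tcoord α β k l ∧ tcoord α β k l < t₁ ∧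
      scoord α β k l < 0 := by
    obtain ⟨k, l, hk, hkt, c, hc, hl⟩ := shrink 0 1 (tcoord_zero_one_pos hβα)
    exact ⟨k, l, hk, hkt, hl ▸ mul_neg_of_pos_of_neg hc (scoord_zero_one_neg hβα)⟩
  refine ((finite_setOf_abs_tcoord_le_abs_scoord_le hαβ t₂
    (max |scoord α β kp lp| |scoord α β kn ln|)).image fun p => tcoord α β p.1 p.2).subset ?_
  rintro _ ⟨⟨m, n, rfl, -, hsign, hempty⟩ | ⟨m, n, rfl, -, hsign, hempty⟩, ht₁t, htt₂⟩
  · refine ⟨(m, n), ⟨abs_le.mpr ⟨by linarith, htt₂.le⟩, le_max_of_le_right ?_⟩, rfl⟩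
    exact abs_scoord_le_of_noLatticeInterior hαβ hempty htn (htnt₁.trans ht₁t)
      (mul_pos_of_neg_of_neg hsn (scoord_neg hβα hsign))
  · refine ⟨(m, n), ⟨abs_le.mpr ⟨by linarith, htt₂.le⟩, le_max_of_le_left ?_⟩, rfl⟩
    exact abs_scoord_le_of_noLatticeInterior hαβ hempty htp (htpt₁.trans ht₁t)
      (mul_pos hsp (scoord_pos hβα hsign))

/-- For all `t₁, t₂ ∈ T` with `t₁ < t₂`, the set
`{t ∈ T : t₁ < t < t₂}` is finite. -/
theorem stmt7 (A : Matrix (Fin 2) (Fin 2) ℤ) (hdet : A.det = 1)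
    (lam mu α β : ℝ)
    (hlam0 : 0 < lam) (hlam1 : lam < 1) (hmu : 1 < mu)
    (hAα0 : (A 0 0 : ℝ) + A 0 1 * α = lam)
    (hAα1 : (A 1 0 : ℝ) + A 1 1 * α = lam * α)
    (hAβ0 : (A 0 0 : ℝ) + A 0 1 * β = mu)
    (hAβ1 : (A 1 0 : ℝ) + A 1 1 * β = mu * β)
    (hβα : β < α) (hα : 0 < α)
    (t₁ t₂ : ℝ) (h₁ : t₁ ∈ Tset α β) (h₂ : t₂ ∈ Tset α β) (h₁₂ : t₁ < t₂) :
    {t ∈ Tset α β | t₁ < t ∧ t < t₂}.Finite :=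
  stmt7_general A lam mu α β hlam0 hlam1 hmu hAα0 hAα1 hAβ0 hAβ1 hβα t₁ t₂ h₁
end
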